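/- Let F be a field, A an n×n matrix over F, p, s, τ natural numbers, λ_1,…,λ_p pairwise distinct nonzero elements of F, and M_{j,i} (1 ≤ j ≤ p, 0 ≤ i < s) n×n matrices over F. Suppose that for every k ≥ τ: A^k = ∑_{j=1}^{p} λ_j^k · ∑_{i=0}^{s−1} C(k,i)·M_{j,i}. Then A is nilpotent if and only if M_{j,i} = 0 for all j and i. -/

import Mathlib

/-!
Let `S` be the shift operator on sequences. The sequence `k ↦ λ^k ∑_{i<s} C(k,i) • m i` lies in
the generalized eigenspace of `S` for `λ`, because `(S - λ)` lowers `s` by one, using Pascal's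
rule. If `A` is nilpotent, the sum of these sequences vanishes from some `K` on, so it is killed
by `S^K` and lies in the generalized eigenspace for `0`. Generalized eigenspaces for distinct
eigenvalues are independent and the `λ_j` are nonzero, so each geometric summand vanishes.
Dividing by `λ^k` and evaluating at `k = 0, 1, …` then forces every `m i = 0`.
-/

open Finset Module

section GeometricBinomial

variable {F E : Type*} [Field F] [AddCommGroup E] [Module F E]

variable (F E) in
def seqShift : End F (ℕ → E) := LinearMap.funLeft F E (· + 1)

@[simp]
lemma seqShift_apply (g : ℕ → E) (k : ℕ) : seqShift F E g k = g (k + 1) := rfl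

lemma seqShift_pow_apply (K : ℕ) (g : ℕ → E) (k : ℕ) : (seqShift F E ^ K) g k = g (k + K) := by
  induction K generalizing k with
  | zero => rfl
  | succ K ih => rw [pow_succ', Module.End.mul_apply, seqShift_apply, ih, add_right_comm, add_assoc]

lemma mem_maxGenEigenspace_zero_of_eventually_eq_zero {g : ℕ → E} {K : ℕ}
    (hg : ∀ k, K ≤ k → g k = 0) : g ∈ (seqShift F E).maxGenEigenspace 0 := by
  rw [Module.End.mem_maxGenEigenspace]
  refine ⟨K, funext fun k => ?_⟩
  rw [zero_smul, sub_zero, seqShift_pow_apply]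
  exact hg _ (Nat.le_add_left K k)

def geomBinomSeq (lam : F) (s : ℕ) (m : ℕ → E) (k : ℕ) : E :=
  lam ^ k • ∑ i ∈ range s, (k.choose i : F) • m i

lemma seqShift_sub_smul_geomBinomSeq (lam : F) (s : ℕ) (m : ℕ → E) :
    (seqShift F E - lam • 1) (geomBinomSeq lam (s + 1) m) =
      geomBinomSeq lam s (fun i => lam • m (i + 1)) := by
  funext k
  simp only [LinearMap.sub_apply, LinearMap.smul_apply, Module.End.one_apply, Pi.sub_apply,
    Pi.smul_apply, seqShift_apply, geomBinomSeq]
  rw [sum_range_succ', sum_range_succ' _ s]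
  simp only [Nat.choose_succ_succ, Nat.choose_zero_right, Nat.cast_add, add_smul, sum_add_distrib,
    smul_add, smul_sum, smul_smul]
  simp only [Nat.succ_eq_add_one, Nat.cast_one, pow_succ, mul_one, mul_comm lam, mul_assoc]
  abel

lemma geomBinomSeq_mem_genEigenspace (lam : F) (s : ℕ) (m : ℕ → E) :
    geomBinomSeq lam s m ∈ (seqShift F E).genEigenspace lam s := by
  rw [Module.End.mem_genEigenspace_nat, LinearMap.mem_ker]
  induction s generalizing m with
  | zero => funext k; simp [geomBinomSeq]
  | succ s ih => rw [pow_succ, Module.End.mul_apply, seqShift_sub_smul_geomBinomSeq, ih]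

lemma eq_zero_of_forall_sum_choose_smul_eq_zero {R M : Type*} [Semiring R] [AddCommMonoid M]
    [Module R M] {s : ℕ} {m : ℕ → M} (h : ∀ k : ℕ, ∑ i ∈ range s, (k.choose i : R) • m i = 0) :
    ∀ i < s, m i = 0 := by
  intro i
  induction i using Nat.strong_induction_on with
  | _ i ih =>
    intro hi
    -- at `k = i` the terms `l < i` vanish by induction and the terms `l > i` have `i.choose l = 0`
    rw [← h i, sum_eq_single_of_mem i (mem_range.2 hi), Nat.choose_self, Nat.cast_one, one_smul]
    intro l hl hli
    rcases lt_or_gt_of_ne hli with hlt | hgt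
    · rw [ih l hlt (mem_range.1 hl), smul_zero]
    · rw [Nat.choose_eq_zero_of_lt hgt, Nat.cast_zero, zero_smul]

lemma eq_zero_of_geomBinomSeq_eq_zero {lam : F} (hlam : lam ≠ 0) {s : ℕ} {m : ℕ → E}
    (h : geomBinomSeq lam s m = 0) : ∀ i < s, m i = 0 :=
  eq_zero_of_forall_sum_choose_smul_eq_zero (R := F) fun k =>
    (smul_eq_zero.1 (congrFun h k)).resolve_left (pow_ne_zero k hlam)

theorem eq_zero_of_sum_geomBinomSeq_eventually_eq_zero {ι : Type*} [Fintype ι] {lam : ι → F}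
    (hlam : ∀ j, lam j ≠ 0) (hinj : Function.Injective lam) {s K : ℕ} (m : ι → ℕ → E)
    (h : ∀ k, K ≤ k → ∑ j, geomBinomSeq (lam j) s (m j) k = 0) :
    ∀ j, ∀ i < s, m j i = 0 := by
  let ν : Option ι → F := fun o => o.elim 0 lam
  have hν : Function.Injective ν := by
    rintro (_ | a) (_ | b) hab
    · rfl
    · exact absurd hab.symm (hlam b)
    · exact absurd hab (hlam a)
    · exact congrArg some (hinj hab)
  let v : Option ι → ℕ → E := fun o =>
    o.elim (-∑ j, geomBinomSeq (lam j) s (m j)) fun j => geomBinomSeq (lam j) s (m j)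
  have hv : ∀ o ∈ univ, v o ∈ (seqShift F E).maxGenEigenspace (ν o) := by
    rintro (_ | j) -
    · refine Submodule.neg_mem _ (mem_maxGenEigenspace_zero_of_eventually_eq_zero (K := K) ?_)
      intro k hk
      rw [Finset.sum_apply]
      exact h k hk
    · exact Module.End.genEigenspace_le_maximal _ _ _ (geomBinomSeq_mem_genEigenspace _ _ _)
  have hsum : ∑ o, v o = 0 := by
    rw [Fintype.sum_option]
    exact neg_add_cancel _
  intro j
  exact eq_zero_of_geomBinomSeq_eq_zero (hlam j) <|
    (iSupIndep_iff_finsetSum_eq_zero_imp_eq_zero _).1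
      ((seqShift F E).independent_maxGenEigenspace.comp hν) univ v hv hsum (some j) (mem_univ _)

end GeometricBinomial

theorem isNilpotent_iff_geometric_part_zero_general
    (F : Type*) [Field F] (n : Type*) [Fintype n] [DecidableEq n]
    (A : Matrix n n F) (p s τ : ℕ)
    (lam : Fin p → F) (hlam : ∀ j, lam j ≠ 0) (hinj : Function.Injective lam)
    (M : Fin p → ℕ → Matrix n n F)
    (hagree : ∀ k : ℕ, τ ≤ k →
      A ^ k = ∑ j : Fin p, lam j ^ k •
        ∑ i ∈ Finset.range s, (k.choose i : F) • M j i) :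
    IsNilpotent A ↔ ∀ (j : Fin p) (i : ℕ), i < s → M j i = 0 := by
  constructor
  · rintro ⟨N, hN⟩
    refine eq_zero_of_sum_geomBinomSeq_eventually_eq_zero hlam hinj M (K := max τ N) fun k hk => ?_
    rw [← pow_eq_zero_of_le (le_of_max_le_right hk) hN]
    exact (hagree k (le_of_max_le_left hk)).symm
  · intro hM
    refine ⟨τ, ?_⟩
    rw [hagree τ le_rfl]
    refine sum_eq_zero fun j _ => ?_
    rw [sum_eq_zero fun i hi => by rw [hM j i (mem_range.1 hi), smul_zero], smul_zero]

/-- If `A^k` agrees with a purely geometric sequence for all `k ≥ τ`, then `A` is nilpotent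
iff all the coefficient matrices of the geometric part vanish. -/
theorem isNilpotent_iff_geometric_part_zero
    (F : Type*) [Field F] (n : Type*) [Fintype n] [DecidableEq n] [Nonempty n]
    (A : Matrix n n F) (p s τ : ℕ)
    (lam : Fin p → F) (hlam : ∀ j, lam j ≠ 0) (hinj : Function.Injective lam)
    (M : Fin p → ℕ → Matrix n n F)
    (hagree : ∀ k : ℕ, τ ≤ k →
      A ^ k = ∑ j : Fin p, lam j ^ k •
        ∑ i ∈ Finset.range s, (k.choose i : F) • M j i) :
    IsNilpotent A ↔ ∀ (j : Fin p) (i : ℕ), i < s → M j i = 0 :=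
  isNilpotent_iff_geometric_part_zero_general F n A p s τ lam hlam hinj M hagree
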